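/- Soundness of the bit-vector translation: let P be a normal logic program and Tr_BV(P) = Tr_CC(P) ∪ Tr_R(P) its translation into fixed-width bit-vector logic. If S is an answer set of P, then there is a model (M,τ) of Tr_BV(P) (where M is a set of propositional atoms and τ a valuation of the bit-vector constants) such that S = M ∩ Hb(P). -/

import Mathlib

/-- A rule `a ← b₁,...,bₙ, not c₁,...,not cₘ` of a normal logic program. -/
structure Rule (α : Type) where
  head : α
  pos : Finset α
  neg : Finset α
deriving DecidableEq

variable {α : Type}

/-- The Herbrand base `Hb(P)`: atoms occurring in the program `P`. -/
def Hb (P : Finset (Rule α)) : Set α :=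
  {a | ∃ r ∈ P, r.head = a ∨ a ∈ r.pos ∨ a ∈ r.neg}

/-- An interpretation `M` satisfies a rule `r` iff `B⁺(r) ⊆ M` and
`B⁻(r) ∩ M = ∅` imply `hd(r) ∈ M`. -/
def ruleSat (M : Set α) (r : Rule α) : Prop :=
  ((↑r.pos : Set α) ⊆ M ∧ ∀ c ∈ r.neg, c ∉ M) → r.head ∈ M

/-- `M` is a classical model of the program `P`. -/
def isModelOf (M : Set α) (P : Finset (Rule α)) : Prop :=
  ∀ r ∈ P, ruleSat M r

/-- A program is positive iff every rule has an empty negative body. -/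
def isPositive (P : Finset (Rule α)) : Prop := ∀ r ∈ P, r.neg = ∅

/-- `L` is the least classical model of `P` (among interpretations `⊆ Hb(P)`). -/
def isLeastModel (P : Finset (Rule α)) (L : Set α) : Prop :=
  L ⊆ Hb P ∧ isModelOf L P ∧ ∀ N : Set α, N ⊆ Hb P → isModelOf N P → L ⊆ N

open Classical in
/-- The Gelfond–Lifschitz reduct `P^M = { hd(r) ← B⁺(r) : r ∈ P, M ∩ B⁻(r) = ∅ }`. -/
noncomputable def reduct [DecidableEq α] (P : Finset (Rule α)) (M : Set α) :
    Finset (Rule α) :=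
  (P.filter fun r => ∀ c ∈ r.neg, c ∉ M).image
    fun r => { head := r.head, pos := r.pos, neg := ∅ }

/-- `M` is an answer set (stable model) of `P` iff `M = LM(P^M)`. -/
def isAnswerSet [DecidableEq α] (P : Finset (Rule α)) (M : Set α) : Prop :=
  M ⊆ Hb P ∧ isLeastModel (reduct P M) M

/-- Propositional atoms of the bit-vector translation `Tr_BV(P)`: the original
atoms of `P`, the body atoms `bd_r`, and the support atoms `ext_a`, `int_a`. -/
inductive XAtom (α : Type) : Type
  | orig : α → XAtom α
  | bd : Rule α → XAtom α
  | ext : α → XAtom α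
  | int : α → XAtom α

/-- Edge relation of the positive dependency graph `DG(P)`:
`depRel P b a` iff `b ≤ a`, i.e., some rule `r ∈ P` has `hd(r) = a` and
`b ∈ B⁺(r)`. -/
def depRel (P : Finset (Rule α)) (b a : α) : Prop :=
  ∃ r ∈ P, r.head = a ∧ b ∈ r.pos

/-- The strongly connected component of `a` in `DG(P)` (w.r.t. the reflexive
transitive closure `≤*` of `≤`). -/
def scc (P : Finset (Rule α)) (a : α) : Set α :=
  {b | Relation.ReflTransGen (depRel P) a b ∧ Relation.ReflTransGen (depRel P) b a}

/-- `a` lies in a non-trivial strongly connected component, `|SCC(a)| > 1`. -/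
noncomputable def nontrivialSCC (P : Finset (Rule α)) (a : α) : Prop :=
  1 < (scc P a).ncard

/-- The width `m = ⌈log₂(|SCC(a)|+1)⌉` of the bit vector `x_a`. -/
noncomputable def width (P : Finset (Rule α)) (a : α) : ℕ :=
  Nat.clog 2 ((scc P a).ncard + 1)

/-- `Def_P(a) = { r ∈ P : hd(r) = a }`. -/
def Def (P : Finset (Rule α)) (a : α) : Set (Rule α) :=
  {r | r ∈ P ∧ r.head = a}

/-- External defining rules: `r ∈ Def_P(a)` with `B⁺(r) ∩ SCC(a) = ∅`. -/
def EDef (P : Finset (Rule α)) (a : α) : Set (Rule α) :=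
  {r | r ∈ Def P a ∧ ∀ b ∈ r.pos, b ∉ scc P a}

/-- Internal defining rules: `r ∈ Def_P(a)` with `B⁺(r) ∩ SCC(a) ≠ ∅`. -/
def IDef (P : Finset (Rule α)) (a : α) : Set (Rule α) :=
  {r | r ∈ Def P a ∧ ∃ b ∈ r.pos, b ∈ scc P a}

/-- `I` satisfies the body of `r`, i.e., `⋀_{b ∈ B⁺(r)} b ∧ ⋀_{c ∈ B⁻(r)} ¬c`. -/
def satBody (I : Set (XAtom α)) (r : Rule α) : Prop :=
  (∀ b ∈ r.pos, XAtom.orig b ∈ I) ∧ (∀ c ∈ r.neg, XAtom.orig c ∉ I)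

/-- `I` is a model of Clark's completion part `Tr_CC(P)` of the translation,
with the usual case analysis: (1) if `Def_P(a) = ∅` include `¬a`; (2) if some
rule in `Def_P(a)` has an empty body include `a`; (3) if `Def_P(a) = {r}` with
a nonempty body include `a ↔ body(r)`; (4) otherwise include
`a ↔ ⋁_{r ∈ Def_P(a)} bd_r` together with `bd_r ↔ body(r)` for each
`r ∈ Def_P(a)`. -/
def satTrCC (P : Finset (Rule α)) (I : Set (XAtom α)) : Prop :=
  ∀ a ∈ Hb P,
    (Def P a = ∅ → XAtom.orig a ∉ I) ∧
    ((∃ r ∈ Def P a, r.pos = ∅ ∧ r.neg = ∅) → XAtom.orig a ∈ I) ∧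
    (∀ r : Rule α, Def P a = {r} → (r.pos ≠ ∅ ∨ r.neg ≠ ∅) →
      (XAtom.orig a ∈ I ↔ satBody I r)) ∧
    ((1 < (Def P a).ncard ∧ ∀ r ∈ Def P a, r.pos ≠ ∅ ∨ r.neg ≠ ∅) →
      ((XAtom.orig a ∈ I ↔ ∃ r ∈ Def P a, XAtom.bd r ∈ I) ∧
        ∀ r ∈ Def P a, (XAtom.bd r ∈ I ↔ satBody I r)))

/-- `(I,τ)` is a model of the (weak) ranking constraints `Tr_R(P)`: for every
atom `a` in a non-trivial SCC, the new atoms `bd_r` (for `r ∈ Def_P(a)`,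
introduced together with their defining formulas `bd_r ↔ body(r)`), `ext_a`
and `int_a` satisfy
`ext_a ↔ ⋁_{r ∈ EDef_P(a)} bd_r`,
`int_a ↔ ⋁_{r ∈ IDef_P(a)} (bd_r ∧ ⋀_{b ∈ B⁺(r) ∩ SCC(a)} x_b <_m x_a)`,
`a → ext_a ∨ int_a`, `¬ext_a ∨ ¬int_a`, and `ext_a → (x_a =_m 0)`. -/
def satTrR (P : Finset (Rule α)) (I : Set (XAtom α)) (τ : α → ℕ) : Prop :=
  ∀ a ∈ Hb P, nontrivialSCC P a →
    (∀ r ∈ Def P a, (XAtom.bd r ∈ I ↔ satBody I r)) ∧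
    (XAtom.ext a ∈ I ↔ ∃ r ∈ EDef P a, XAtom.bd r ∈ I) ∧
    (XAtom.int a ∈ I ↔
      ∃ r ∈ IDef P a, XAtom.bd r ∈ I ∧
        ∀ b ∈ r.pos, b ∈ scc P a → τ b < τ a) ∧
    (XAtom.orig a ∈ I → XAtom.ext a ∈ I ∨ XAtom.int a ∈ I) ∧
    (XAtom.ext a ∉ I ∨ XAtom.int a ∉ I) ∧
    (XAtom.ext a ∈ I → τ a = 0)

/-- `τ` is an admissible bit-vector valuation: each constant `x_a` (introduced
for atoms `a` of non-trivial SCCs) takes an `m`-bit value,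
`τ(x_a) ∈ {0,...,2^m − 1}` where `m = ⌈log₂(|SCC(a)|+1)⌉`. -/
def isBVValuation (P : Finset (Rule α)) (τ : α → ℕ) : Prop :=
  ∀ a ∈ Hb P, nontrivialSCC P a → τ a < 2 ^ width P a

/-! The answer set `S` is the union of the stages `T₀ = ∅ ⊆ T₁ ⊆ ⋯` of the immediate-consequence
operator of the reduct `P^S`. The first stage containing an atom is its rank, and an atom of rank
`n + 1` is derived by a rule of `P` whose body is true in `S` and whose positive body atoms have
rank at most `n`. Hence `S` is supported, and `S`, together with the truth values of the rule
bodies, satisfies the completion. For the ranking constraints put `x_a = 0` when `a` has a true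
external rule, and otherwise let `x_a` be the number of atoms of `SCC(a) ∩ S` of smaller rank:
this is at most `|SCC(a)|`, so it fits in `m` bits, and it strictly decreases from `a` to the
atoms of `SCC(a)` in the positive body of the rule deriving `a`. -/

lemma finite_Hb (P : Finset (Rule α)) : (Hb P).Finite := by
  refine (P.finite_toSet.biUnion fun r _ =>
    Set.toFinite (insert r.head (↑r.pos ∪ ↑r.neg))).subset ?_
  rintro a ⟨r, hr, h⟩
  refine Set.mem_biUnion hr ?_
  simp only [Set.mem_insert_iff, Set.mem_union, Finset.mem_coe]
  rcases h with h | h | h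
  exacts [Or.inl h.symm, Or.inr (Or.inl h), Or.inr (Or.inr h)]

lemma mem_reduct [DecidableEq α] {P : Finset (Rule α)} {S : Set α} {r' : Rule α} :
    r' ∈ reduct P S ↔
      ∃ r ∈ P, (∀ c ∈ r.neg, c ∉ S) ∧ r' = { head := r.head, pos := r.pos, neg := ∅ } := by
  simp only [reduct, Finset.mem_image, Finset.mem_filter, and_assoc, eq_comm]

def bodyTrue (S : Set α) (r : Rule α) : Prop :=
  (↑r.pos : Set α) ⊆ S ∧ ∀ c ∈ r.neg, c ∉ S

/-- `T_{P^S}ⁿ(∅)`, with the reduct unfolded into the rules of `P`. -/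
def reductStage (P : Finset (Rule α)) (S : Set α) : ℕ → Set α
  | 0 => ∅
  | n + 1 => {a | ∃ r ∈ P, r.head = a ∧ (↑r.pos : Set α) ⊆ reductStage P S n ∧ ∀ c ∈ r.neg, c ∉ S}

-- Atoms in no stage get the junk rank `sInf ∅ = 0`.
noncomputable def reductRank (P : Finset (Rule α)) (S : Set α) (a : α) : ℕ :=
  sInf {n | a ∈ reductStage P S n}

section Stages

variable {P : Finset (Rule α)} {S : Set α}

lemma reductStage_mono : Monotone (reductStage P S) := by
  refine monotone_nat_of_le_succ fun n => ?_
  induction n with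
  | zero => exact Set.empty_subset _
  | succ n ih =>
    rintro a ⟨r, hr, rfl, hpos, hneg⟩
    exact ⟨r, hr, rfl, hpos.trans ih, hneg⟩

variable [DecidableEq α]

lemma head_mem_of_isAnswerSet (hS : isAnswerSet P S) {r : Rule α} (hr : r ∈ P)
    (hbody : bodyTrue S r) : r.head ∈ S :=
  hS.2.2.1 { head := r.head, pos := r.pos, neg := ∅ } (mem_reduct.2 ⟨r, hr, hbody.2, rfl⟩)
    ⟨hbody.1, by simp⟩

lemma reductStage_subset (hS : isAnswerSet P S) (n : ℕ) : reductStage P S n ⊆ S := by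
  induction n with
  | zero => exact Set.empty_subset _
  | succ n ih =>
    rintro a ⟨r, hr, rfl, hpos, hneg⟩
    exact head_mem_of_isAnswerSet hS hr ⟨hpos.trans ih, hneg⟩

/-- The union of the stages is a model of `P^S` inside `Hb(P^S)`, so it contains the least
model `S`. -/
lemma subset_iUnion_reductStage (hS : isAnswerSet P S) : S ⊆ ⋃ n, reductStage P S n := by
  refine hS.2.2.2 _ ?_ ?_
  · intro a ha
    obtain ⟨_ | n, ha⟩ := Set.mem_iUnion.1 ha
    · exact ha.elim
    · obtain ⟨r, hr, rfl, -, hneg⟩ := ha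
      exact ⟨_, mem_reduct.2 ⟨r, hr, hneg, rfl⟩, Or.inl rfl⟩
  · intro r' hr' ⟨hpos, _⟩
    obtain ⟨r, hr, hneg, rfl⟩ := mem_reduct.1 hr'
    obtain ⟨n, hn⟩ :=
      reductStage_mono.directed_le.exists_mem_subset_of_finset_subset_biUnion hpos
    exact Set.mem_iUnion.2 ⟨n + 1, r, hr, rfl, hn, hneg⟩

lemma exists_rule_reductRank_lt (hS : isAnswerSet P S) {a : α} (ha : a ∈ S) :
    ∃ r ∈ Def P a, bodyTrue S r ∧ ∀ b ∈ r.pos, reductRank P S b < reductRank P S a := by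
  have hmem : a ∈ reductStage P S (reductRank P S a) :=
    Nat.sInf_mem (Set.mem_iUnion.1 (subset_iUnion_reductStage hS ha))
  rcases hrank : reductRank P S a with _ | n
  · rw [hrank] at hmem
    exact hmem.elim
  · rw [hrank] at hmem
    obtain ⟨r, hr, hhead, hpos, hneg⟩ := hmem
    refine ⟨r, ⟨hr, hhead⟩, ⟨hpos.trans (reductStage_subset hS n), hneg⟩, fun b hb => ?_⟩
    exact Nat.lt_succ_of_le (Nat.sInf_le (hpos hb))

lemma mem_iff_exists_bodyTrue (hS : isAnswerSet P S) (a : α) :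
    a ∈ S ↔ ∃ r ∈ Def P a, bodyTrue S r := by
  refine ⟨fun ha => ?_, ?_⟩
  · obtain ⟨r, hr, hbody, -⟩ := exists_rule_reductRank_lt hS ha
    exact ⟨r, hr, hbody⟩
  · rintro ⟨r, ⟨hr, rfl⟩, hbody⟩
    exact head_mem_of_isAnswerSet hS hr hbody

end Stages

section SCC

variable {P : Finset (Rule α)}

lemma scc_eq_of_mem {a b : α} (hb : b ∈ scc P a) : scc P b = scc P a := by
  obtain ⟨hab, hba⟩ := hb
  ext c
  exact ⟨fun ⟨h1, h2⟩ => ⟨hab.trans h1, h2.trans hba⟩,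
    fun ⟨h1, h2⟩ => ⟨hba.trans h1, h2.trans hab⟩⟩

lemma scc_subset_Hb {a : α} (ha : a ∈ Hb P) : scc P a ⊆ Hb P := by
  rintro b ⟨hab, -⟩
  induction hab with
  | refl => exact ha
  | tail _ hdep =>
    obtain ⟨r, hr, hhead, -⟩ := hdep
    exact ⟨r, hr, Or.inl hhead⟩

lemma finite_scc {a : α} (ha : a ∈ Hb P) : (scc P a).Finite :=
  (finite_Hb P).subset (scc_subset_Hb ha)

end SCC

section Valuation

variable (P : Finset (Rule α)) (S : Set α)

def extSupported (a : α) : Prop :=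
  ∃ r ∈ EDef P a, bodyTrue S r

noncomputable def sccRank (a : α) : ℕ :=
  {b | b ∈ scc P a ∧ b ∈ S ∧ reductRank P S b < reductRank P S a}.ncard

open Classical in
/-- The value of the bit vector `x_a`. -/
noncomputable def rankValuation (a : α) : ℕ :=
  if extSupported P S a then 0 else sccRank P S a

variable {P S}

lemma rankValuation_of_extSupported {a : α} (h : extSupported P S a) :
    rankValuation P S a = 0 :=
  if_pos h

lemma rankValuation_of_not_extSupported {a : α} (h : ¬extSupported P S a) :
    rankValuation P S a = sccRank P S a :=
  if_neg h

lemma rankValuation_le_sccRank (a : α) : rankValuation P S a ≤ sccRank P S a := by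
  unfold rankValuation
  split_ifs
  exacts [Nat.zero_le _, le_rfl]

lemma sccRank_le_ncard {a : α} (ha : a ∈ Hb P) : sccRank P S a ≤ (scc P a).ncard :=
  Set.ncard_le_ncard (fun _ hb => hb.1) (finite_scc ha)

lemma rankValuation_lt_sccRank {a b : α} (ha : a ∈ Hb P) (hb : b ∈ scc P a) (hbS : b ∈ S)
    (hrank : reductRank P S b < reductRank P S a) : rankValuation P S b < sccRank P S a := by
  have hssub : {c | c ∈ scc P b ∧ c ∈ S ∧ reductRank P S c < reductRank P S b} ⊂
      {c | c ∈ scc P a ∧ c ∈ S ∧ reductRank P S c < reductRank P S a} := by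
    rw [scc_eq_of_mem hb]
    refine ⟨fun c ⟨hc, hcS, hcb⟩ => ⟨hc, hcS, hcb.trans hrank⟩, fun hsub => ?_⟩
    exact lt_irrefl _ (hsub ⟨hb, hbS, hrank⟩).2.2
  calc rankValuation P S b ≤ sccRank P S b := rankValuation_le_sccRank b
    _ < sccRank P S a := Set.ncard_lt_ncard hssub ((finite_scc ha).subset fun _ hc => hc.1)

lemma isBVValuation_rankValuation : isBVValuation P (rankValuation P S) := fun a ha _ =>
  calc rankValuation P S a ≤ (scc P a).ncard :=
        (rankValuation_le_sccRank a).trans (sccRank_le_ncard ha)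
    _ < (scc P a).ncard + 1 := Nat.lt_succ_self _
    _ ≤ 2 ^ width P a := Nat.le_pow_clog one_lt_two _

end Valuation

def answerModel (P : Finset (Rule α)) (S : Set α) : Set (XAtom α) := fun x =>
  match x with
  | .orig a => a ∈ S
  | .bd r => bodyTrue S r
  | .ext a => extSupported P S a
  | .int a => ∃ r ∈ IDef P a, bodyTrue S r ∧
      ∀ b ∈ r.pos, b ∈ scc P a → rankValuation P S b < rankValuation P S a

section Model

variable {P : Finset (Rule α)} {S : Set α}

lemma satTrCC_of_supported {I : Set (XAtom α)}
    (hsupp : ∀ a, XAtom.orig a ∈ I ↔ ∃ r ∈ Def P a, satBody I r)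
    (hbd : ∀ r, XAtom.bd r ∈ I ↔ satBody I r) : satTrCC P I := by
  intro a _
  refine ⟨fun hdef => ?_, fun ⟨r, hr, hpos, hneg⟩ => ?_, fun r hdef _ => ?_, fun _ => ?_⟩
  · simp [hsupp, hdef]
  · exact (hsupp a).2 ⟨r, hr, by simp [satBody, hpos, hneg]⟩
  · simp [hsupp, hdef]
  · exact ⟨(hsupp a).trans (exists_congr fun r => and_congr_right' (hbd r).symm), fun r _ => hbd r⟩

variable [DecidableEq α]

lemma satTrCC_answerModel (hS : isAnswerSet P S) : satTrCC P (answerModel P S) :=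
  satTrCC_of_supported (mem_iff_exists_bodyTrue hS) fun _ => Iff.rfl

/-- An atom of `S` without a true external rule is derived by a rule with a positive body atom
in its SCC, and the valuation decreases along that rule. -/
lemma ext_or_int_mem_answerModel (hS : isAnswerSet P S) {a : α} (ha : a ∈ Hb P)
    (haS : a ∈ S) : XAtom.ext a ∈ answerModel P S ∨ XAtom.int a ∈ answerModel P S := by
  by_cases hext : extSupported P S a
  · exact Or.inl hext
  obtain ⟨r, hr, hbody, hrank⟩ := exists_rule_reductRank_lt hS haS
  have hint : ∃ b ∈ r.pos, b ∈ scc P a := by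
    by_contra! hnone
    exact hext ⟨r, ⟨hr, hnone⟩, hbody⟩
  refine Or.inr ⟨r, ⟨hr, hint⟩, hbody, fun b hb hbscc => ?_⟩
  rw [rankValuation_of_not_extSupported hext]
  exact rankValuation_lt_sccRank ha hbscc (hbody.1 hb) (hrank b hb)

lemma satTrR_answerModel (hS : isAnswerSet P S) :
    satTrR P (answerModel P S) (rankValuation P S) := by
  intro a ha _
  refine ⟨fun _ _ => Iff.rfl, Iff.rfl, Iff.rfl, ext_or_int_mem_answerModel hS ha, ?_,
    rankValuation_of_extSupported⟩
  by_cases hext : extSupported P S a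
  · refine Or.inr fun ⟨r, ⟨_, b, hb, hbscc⟩, _, hlt⟩ => ?_
    exact Nat.not_lt_zero _ (rankValuation_of_extSupported hext ▸ hlt b hb hbscc)
  · exact Or.inl hext

end Model

/-- Soundness of the bit-vector translation. If `S` is an
answer set of a normal program `P`, then there is a model `(M,τ)` of
`Tr_BV(P) = Tr_CC(P) ∪ Tr_R(P)` such that `S = M ∩ Hb(P)`. -/
theorem trBV_sound [DecidableEq α] (P : Finset (Rule α)) (S : Set α)
    (hS : isAnswerSet P S) :
    ∃ (M : Set (XAtom α)) (τ : α → ℕ),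
      isBVValuation P τ ∧ satTrCC P M ∧ satTrR P M τ ∧
      S = {a | a ∈ Hb P ∧ XAtom.orig a ∈ M} :=
  ⟨answerModel P S, rankValuation P S, isBVValuation_rankValuation, satTrCC_answerModel hS,
    satTrR_answerModel hS, Set.ext fun _ => ⟨fun ha => ⟨hS.1 ha, ha⟩, And.right⟩⟩
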